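/- Every cycle in the glued binary tree GT(r) contains exactly two quasi-leaves, and hence every cycle can be written uniquely in the form C_{i,j}, the union of the two geodesic paths between quasi-leaves v_i and v_j. -/

import Mathlib

def MVSet {V : Type*} (G : SimpleGraph V) (S : Set V) : Prop :=
  ∀ x ∈ S, ∀ y ∈ S, ∃ p : G.Walk x y, p.IsPath ∧ p.length = G.dist x y ∧
    ∀ z ∈ p.support, z ≠ x → z ≠ y → z ∉ S

def MVColoring {V : Type*} {α : Type*} (G : SimpleGraph V) (f : V → α) : Prop :=
  ∀ a : α, MVSet G {v | f v = a}

noncomputable def chiMu {V : Type*} (G : SimpleGraph V) : ℕ :=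
  sInf {k : ℕ | ∃ f : V → Fin k, MVColoring G f}

/-- `a` is a child of `b` in the tree of finite sequences. -/
def IsChild {t : ℕ} (a b : List (Fin t)) : Prop := ∃ x : Fin t, a = b ++ [x]

/-- The vertex set of the glued `t`-ary tree `GT(r,t)`: vertices of the first
copy of the perfect `t`-ary tree of depth `r` (including the identified leaves,
the quasi-leaves), together with the internal vertices of the second copy. -/
def GTVert (r t : ℕ) : Type :=
  {l : List (Fin t) // l.length ≤ r} ⊕ {l : List (Fin t) // l.length < r}

/-- The glued `t`-ary tree `GT(r,t)`: two copies of the perfect `t`-ary tree of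
depth `r` with their leaves pairwise identified. -/
def GT (r t : ℕ) : SimpleGraph (GTVert r t) :=
  SimpleGraph.fromRel (fun u v =>
    match u, v with
    | .inl a, .inl b => IsChild a.1 b.1
    | .inr a, .inr b => IsChild a.1 b.1
    | .inl a, .inr b => a.1.length = r ∧ IsChild a.1 b.1
    | .inr _, .inl _ => False)

/-- Quasi-leaves of `GT(r,t)`: the identified leaves of the two copies. -/
def IsQuasiLeaf {r t : ℕ} (v : GTVert r t) : Prop :=
  match v with
  | .inl a => a.1.length = r
  | .inr _ => False

/-- Vertices in the first copy of the tree, not quasi-leaves. -/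
def InCopyOne {r t : ℕ} (v : GTVert r t) : Prop :=
  match v with
  | .inl a => a.1.length < r
  | .inr _ => False

/-- Vertices in the second copy of the tree, not quasi-leaves. -/
def InCopyTwo {r t : ℕ} (v : GTVert r t) : Prop :=
  match v with
  | .inl _ => False
  | .inr _ => True

/-- A geodesic: a path realizing the distance between its endpoints. -/
def IsGeodesic {V : Type*} (G : SimpleGraph V) {u v : V} (p : G.Walk u v) : Prop :=
  p.IsPath ∧ p.length = G.dist u v

/-!
Forgetting the copy a vertex lies in maps `GT r t` homomorphically onto the prefix tree of
`Fin t`-sequences, and swapping the two copies while fixing the quasi-leaves (`mirror`) is an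
automorphism. Every edge of the prefix tree is a bridge, and the only edges of `GT r t` lying over
it are an edge and its mirror image; hence a cycle containing an edge contains its mirror image.
In particular a cycle meets a quasi-leaf `u`. The arc `A` of the cycle from `u` to the next
quasi-leaf `v` stays in one copy, so its mirror image is disjoint from it and closes up the cycle:
the cycle is `A` followed by the mirror image of `A` backwards, and its only quasi-leaves are `u`
and `v`. Both arcs map injectively into the prefix tree, which is acyclic, so both map onto the
unique path between the labels of `u` and `v` and are geodesics.
-/

namespace SimpleGraph

variable {V W : Type*} {G : SimpleGraph V}

theorem Walk.IsCycle.exists_walk_notMem_edges {x v w : V} {c : G.Walk x x} (hc : c.IsCycle)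
    (he : s(v, w) ∈ c.edges) :
    ∃ p : G.Walk v w, s(v, w) ∉ p.edges ∧ ∀ e ∈ p.edges, e ∈ c.edges := by
  -- In the graph formed by the edges of `c`, the edge `s(v, w)` lies on a cycle.
  let H := fromEdgeSet {e | e ∈ c.edges}
  have hcH : ∀ e ∈ c.edges, e ∈ H.edgeSet := fun e he => by
    rw [edgeSet_fromEdgeSet]
    exact ⟨he, G.not_isDiag_of_mem_edgeSet (c.edges_subset_edgeSet he)⟩
  obtain ⟨-, hreach⟩ := adj_and_reachable_delete_edges_iff_exists_cycle.mpr
    ⟨x, c.transfer H hcH, hc.transfer hcH, by rwa [Walk.edges_transfer]⟩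
  obtain ⟨p, hp⟩ := reachable_deleteEdges_iff_exists_walk.mp hreach
  have hpc : ∀ e ∈ p.edges, e ∈ c.edges := fun e he => by
    have := p.edges_subset_edgeSet he
    rw [edgeSet_fromEdgeSet] at this
    exact this.1
  exact ⟨p.transfer G fun e he => c.edges_subset_edgeSet (hpc e he),
    by rwa [Walk.edges_transfer], by rwa [Walk.edges_transfer]⟩

theorem Walk.IsPath.eq_of_edges_subset {u v : V} {p q : G.Walk u v} (hp : p.IsPath)
    (hq : q.IsPath) (h : p.edges ⊆ q.edges) : p = q := by
  induction p with
  | nil => exact (isPath_iff_nil.mp hq).eq_nil.symm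
  | @cons u a v hua p ih =>
    rw [cons_isPath_iff] at hp
    cases q with
    | nil => exact absurd p.end_mem_support hp.2
    | @cons _ b _ hub q =>
      rw [cons_isPath_iff] at hq
      have hab : a = b := by
        rcases List.mem_cons.mp (h List.mem_cons_self) with h1 | h1
        · exact Sym2.congr_right.mp h1
        · exact absurd (q.fst_mem_support_of_mem_edges h1) hq.2
      subst hab
      refine congrArg _ (ih hp.1 hq.1 fun e he => ?_)
      rcases List.mem_cons.mp (h (List.mem_cons_of_mem _ he)) with h1 | h1
      · exact absurd (p.fst_mem_support_of_mem_edges (h1 ▸ he)) hp.2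
      · exact h1

theorem Walk.length_eq_dist_of_isPath_map {G' : SimpleGraph W} (f : G →g G')
    (hG' : G'.IsAcyclic) {u v : V} {p : G.Walk u v} (hp : (p.map f).IsPath) :
    p.length = G.dist u v := by
  classical
  obtain ⟨q, hq⟩ := p.reachable.exists_walk_length_eq_dist
  have hpq : p.map f = (q.map f).bypass := congrArg Subtype.val
    ((hG'.subsingleton_path _ _).elim ⟨_, hp⟩ ⟨_, (q.map f).bypass_isPath⟩)
  refine le_antisymm ?_ (dist_le p)
  calc p.length = (p.map f).length := (p.length_map f).symm
    _ ≤ (q.map f).length := hpq ▸ (q.map f).length_bypass_le_length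
    _ = G.dist u v := by rw [Walk.length_map, hq]

end SimpleGraph

open SimpleGraph

lemma IsChild.length_eq {t : ℕ} {a b : List (Fin t)} (h : IsChild a b) :
    a.length = b.length + 1 := by
  obtain ⟨x, rfl⟩ := h
  simp

def prefixTree (t : ℕ) : SimpleGraph (List (Fin t)) := fromRel IsChild

lemma prefixTree_adj {t : ℕ} {a b : List (Fin t)} :
    (prefixTree t).Adj a b ↔ IsChild a b ∨ IsChild b a := by
  refine ⟨fun h => h.2, fun h => ⟨fun hab => ?_, h⟩⟩
  rcases h with h | h <;> (have := h.length_eq; simp_all)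

lemma prefixTree_isBridge_snoc {t : ℕ} (a : List (Fin t)) (x : Fin t) :
    (prefixTree t).IsBridge s(a ++ [x], a) := by
  -- It is the only edge leaving the extensions of `a ++ [x]`.
  refine isBridge_iff_forall_walk_mem_edges.mpr fun p => ?_
  obtain ⟨d, hd, hin, hout⟩ := p.exists_boundary_dart {l | a ++ [x] <+: l}
    (List.prefix_refl _) fun h => by simpa using h.length_le
  have hedge : d.edge = s(a ++ [x], a) := by
    obtain ⟨y, hy⟩ | ⟨y, hy⟩ := prefixTree_adj.mp d.adj
    · rw [Set.mem_ofPred_eq, hy, List.prefix_concat_iff] at hin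
      have hfst := (hin.resolve_right hout).symm
      rw [Dart.edge, show d.toProd = (a ++ [x], a) from
        Prod.ext (hy.trans hfst) (List.append_inj' hfst rfl).1]
    · exact absurd (hin.trans (hy ▸ List.prefix_append _ _)) hout
  exact hedge ▸ List.mem_map_of_mem hd

theorem prefixTree_isAcyclic (t : ℕ) : (prefixTree t).IsAcyclic := by
  refine isAcyclic_iff_forall_adj_isBridge.mpr fun v w h => ?_
  obtain ⟨x, rfl⟩ | ⟨x, rfl⟩ := prefixTree_adj.mp h
  · exact prefixTree_isBridge_snoc w x
  · rw [Sym2.eq_swap]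
    exact prefixTree_isBridge_snoc v x

namespace GTVert

variable {r t : ℕ}

def label : GTVert r t → List (Fin t)
  | .inl a => a.1
  | .inr a => a.1

def isLeft : GTVert r t → Bool
  | .inl _ => true
  | .inr _ => false

lemma isQuasiLeaf_iff_label_length {x : GTVert r t} : IsQuasiLeaf x ↔ x.label.length = r := by
  rcases x with _ | ⟨a, ha⟩
  · rfl
  · simpa [IsQuasiLeaf, label] using ha.ne

lemma isLeft_of_isQuasiLeaf {x : GTVert r t} (h : IsQuasiLeaf x) : x.isLeft := by
  rcases x with _ | ⟨a, ha⟩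
  · rfl
  · exact h.elim

lemma inCopyOne_iff {x : GTVert r t} : InCopyOne x ↔ x.isLeft ∧ ¬ IsQuasiLeaf x := by
  rcases x with ⟨a, ha⟩ | _
  · simpa [InCopyOne, IsQuasiLeaf, isLeft] using Nat.lt_iff_le_and_ne.trans (and_iff_right ha)
  · simp [InCopyOne, isLeft]

lemma inCopyTwo_iff {x : GTVert r t} : InCopyTwo x ↔ x.isLeft = false := by
  rcases x with _ | _ <;> simp [InCopyTwo, isLeft]

lemma eq_of_label_eq_of_isLeft_eq {x y : GTVert r t} (hl : x.label = y.label)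
    (hs : x.isLeft = y.isLeft) : x = y := by
  rcases x with ⟨a, ha⟩ | ⟨a, ha⟩ <;> rcases y with ⟨b, hb⟩ | ⟨b, hb⟩ <;>
    simp only [label, isLeft] at hl hs <;> first | subst hl; rfl | cases hs

lemma adj_iff {x y : GTVert r t} : (GT r t).Adj x y ↔
    (IsChild x.label y.label ∨ IsChild y.label x.label) ∧
      (x.isLeft = y.isLeft ∨ IsQuasiLeaf x ∨ IsQuasiLeaf y) := by
  rw [GT, fromRel_adj]
  rcases x with ⟨a, ha⟩ | ⟨a, ha⟩ <;> rcases y with ⟨b, hb⟩ | ⟨b, hb⟩ <;>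
    simp only [label, isLeft, IsQuasiLeaf] <;> grind [IsChild.length_eq]

def labelHom : GT r t →g prefixTree t where
  toFun := label
  map_rel' h := prefixTree_adj.mpr (adj_iff.mp h).1

lemma not_isQuasiLeaf_or_of_adj {x y : GTVert r t} (h : (GT r t).Adj x y) :
    ¬ IsQuasiLeaf x ∨ ¬ IsQuasiLeaf y := by
  rw [isQuasiLeaf_iff_label_length, isQuasiLeaf_iff_label_length]
  rcases (adj_iff.mp h).1 with h | h <;> (have := h.length_eq; omega)

lemma isLeft_eq_of_adj {x y : GTVert r t} (h : (GT r t).Adj x y) (hx : ¬ IsQuasiLeaf x)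
    (hy : ¬ IsQuasiLeaf y) : x.isLeft = y.isLeft := by
  simpa [hx, hy] using (adj_iff.mp h).2

def mirror : GTVert r t → GTVert r t
  | .inl a => if h : a.1.length = r then .inl a else .inr ⟨a.1, lt_of_le_of_ne a.2 h⟩
  | .inr b => .inl ⟨b.1, b.2.le⟩

@[simp] lemma label_mirror (x : GTVert r t) : x.mirror.label = x.label := by
  rcases x with a | a
  · by_cases h : a.1.length = r <;> simp [mirror, h, label]
  · rfl

@[simp] lemma isQuasiLeaf_mirror {x : GTVert r t} : IsQuasiLeaf x.mirror ↔ IsQuasiLeaf x := by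
  simp [isQuasiLeaf_iff_label_length]

lemma mirror_eq_self {x : GTVert r t} (h : IsQuasiLeaf x) : x.mirror = x :=
  eq_of_label_eq_of_isLeft_eq (label_mirror x)
    ((isLeft_of_isQuasiLeaf (isQuasiLeaf_mirror.mpr h)).trans (isLeft_of_isQuasiLeaf h).symm)

lemma isLeft_mirror {x : GTVert r t} (h : ¬ IsQuasiLeaf x) : x.mirror.isLeft = !x.isLeft := by
  rcases x with ⟨a, ha⟩ | ⟨a, ha⟩
  · have : a.length ≠ r := h
    simp [mirror, this, isLeft]
  · rfl

@[simp] lemma mirror_mirror (x : GTVert r t) : x.mirror.mirror = x := by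
  by_cases h : IsQuasiLeaf x
  · rw [mirror_eq_self h, mirror_eq_self h]
  · refine eq_of_label_eq_of_isLeft_eq (by simp) ?_
    rw [isLeft_mirror (by simpa using h), isLeft_mirror h, Bool.not_not]

lemma mirror_injective : Function.Injective (mirror : GTVert r t → GTVert r t) :=
  Function.LeftInverse.injective mirror_mirror

lemma mirror_adj {x y : GTVert r t} (h : (GT r t).Adj x y) : (GT r t).Adj x.mirror y.mirror := by
  rw [adj_iff] at h ⊢
  refine ⟨by simpa using h.1, ?_⟩
  by_cases hx : IsQuasiLeaf x
  · simp [hx]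
  by_cases hy : IsQuasiLeaf y
  · simp [hy]
  simp_all [isLeft_mirror]

def mirrorHom : GT r t →g GT r t := ⟨mirror, mirror_adj⟩

lemma eq_or_eq_mirror_of_label_eq {x y : GTVert r t} (h : x.label = y.label) :
    x = y ∨ x = y.mirror := by
  by_cases hs : x.isLeft = y.isLeft
  · exact .inl (eq_of_label_eq_of_isLeft_eq h hs)
  have hy : ¬ IsQuasiLeaf y := fun hy => hs <| by
    rw [isLeft_of_isQuasiLeaf hy, isLeft_of_isQuasiLeaf (isQuasiLeaf_iff_label_length.mpr
      (h ▸ isQuasiLeaf_iff_label_length.mp hy))]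
  refine .inr (eq_of_label_eq_of_isLeft_eq (by simpa using h) ?_)
  rw [isLeft_mirror hy]
  revert hs
  cases x.isLeft <;> cases y.isLeft <;> decide

lemma exists_mem_edges_map_label_eq {x y : GTVert r t} (h : (GT r t).Adj x y)
    (w : (GT r t).Walk x y) : ∃ e ∈ w.edges, e.map label = s(x.label, y.label) := by
  have hbridge :=
    isAcyclic_iff_forall_adj_isBridge.mp (prefixTree_isAcyclic t) (labelHom.map_adj h)
  have := isBridge_iff_forall_walk_mem_edges.mp hbridge (w.map labelHom)
  rw [Walk.edges_map, List.mem_map] at this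
  exact this

lemma isQuasiLeaf_of_adj_of_adj_mirror {x y : GTVert r t} (h : (GT r t).Adj x y)
    (h' : (GT r t).Adj x y.mirror) (hy : ¬ IsQuasiLeaf y) : IsQuasiLeaf x := by
  by_contra hx
  have := (isLeft_eq_of_adj h hx hy).symm.trans
    (isLeft_eq_of_adj h' hx (by simpa using hy))
  rw [isLeft_mirror hy] at this
  cases y.isLeft <;> simp at this

lemma mk_eq_or_eq_mirror_of_label_eq {x y a b : GTVert r t} (hxy : (GT r t).Adj x y)
    (hab : (GT r t).Adj a b) (ha : a.label = x.label) (hb : b.label = y.label) :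
    s(a, b) = s(x, y) ∨ s(a, b) = s(x.mirror, y.mirror) := by
  rcases eq_or_eq_mirror_of_label_eq ha with rfl | rfl <;>
    rcases eq_or_eq_mirror_of_label_eq hb with rfl | rfl
  · exact .inl rfl
  · by_cases hy : IsQuasiLeaf y
    · simp [mirror_eq_self hy]
    · simp [mirror_eq_self (isQuasiLeaf_of_adj_of_adj_mirror hxy hab hy)]
  · by_cases hx : IsQuasiLeaf x
    · simp [mirror_eq_self hx]
    · simp [mirror_eq_self (isQuasiLeaf_of_adj_of_adj_mirror hxy.symm hab.symm hx)]
  · exact .inr rfl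

lemma eq_or_eq_map_mirror_of_map_label_eq {x y : GTVert r t} (hxy : (GT r t).Adj x y)
    {e : Sym2 (GTVert r t)} (he : e ∈ (GT r t).edgeSet)
    (hl : e.map label = s(x.label, y.label)) :
    e = s(x, y) ∨ e = s(x, y).map mirror := by
  induction e using Sym2.ind with
  | h a b =>
    rw [Sym2.map_mk]
    rcases Sym2.eq_iff.mp hl with ⟨ha, hb⟩ | ⟨ha, hb⟩
    · exact mk_eq_or_eq_mirror_of_label_eq hxy he ha hb
    · rw [Sym2.eq_swap (a := a)]
      exact mk_eq_or_eq_mirror_of_label_eq hxy (GT r t |>.adj_symm he) hb ha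

theorem map_mirror_mem_edges_of_isCycle {z : GTVert r t} {c : (GT r t).Walk z z}
    (hc : c.IsCycle) {e : Sym2 (GTVert r t)} (he : e ∈ c.edges) : e.map mirror ∈ c.edges := by
  induction e using Sym2.ind with
  | h x y =>
    -- The rest of the cycle joins `x` to `y`, so its image crosses the bridge
    -- `s(x.label, y.label)` of the prefix tree.
    have hxy : (GT r t).Adj x y := c.adj_of_mem_edges he
    obtain ⟨p, hpe, hpc⟩ := hc.exists_walk_notMem_edges he
    obtain ⟨f, hf, hfl⟩ := exists_mem_edges_map_label_eq hxy p
    rcases eq_or_eq_map_mirror_of_map_label_eq hxy (p.edges_subset_edgeSet hf) hfl with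
      rfl | rfl
    · exact absurd hf hpe
    · exact hpc _ hf

lemma isLeft_eq_of_forall_not_isQuasiLeaf {x y : GTVert r t} (w : (GT r t).Walk x y)
    (hw : ∀ z ∈ w.support, ¬ IsQuasiLeaf z) : ∀ z ∈ w.support, z.isLeft = x.isLeft := by
  induction w with
  | nil => simp
  | @cons x y _ h w ih =>
    have hxy := isLeft_eq_of_adj h (hw x (by simp)) (hw y (by simp))
    simp only [Walk.support_cons, List.mem_cons, forall_eq_or_imp, true_and] at hw ⊢
    exact fun z hz => (ih hw.2 z hz).trans hxy.symm

theorem exists_isQuasiLeaf_mem_support_of_isCycle {z : GTVert r t} {c : (GT r t).Walk z z}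
    (hc : c.IsCycle) : ∃ u ∈ c.support, IsQuasiLeaf u := by
  by_contra! hc'
  obtain ⟨x, hzx, w, rfl⟩ := Walk.not_nil_iff.mp hc.not_nil
  have hmem : s(z, x).map mirror ∈ (Walk.cons hzx w).edges :=
    map_mirror_mem_edges_of_isCycle hc (by simp)
  have hside := isLeft_eq_of_forall_not_isQuasiLeaf _ hc'
  have := (hside _ (Walk.fst_mem_support_of_mem_edges _ hmem))
  rw [isLeft_mirror (hc' z (by simp))] at this
  cases z.isLeft <;> simp at this

lemma injOn_label {S : Set (GTVert r t)} {b : Bool}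
    (hS : ∀ z ∈ S, ¬ IsQuasiLeaf z → z.isLeft = b) : S.InjOn label := by
  intro x hx y hy h
  by_cases hxq : IsQuasiLeaf x
  · have hyq : IsQuasiLeaf y := isQuasiLeaf_iff_label_length.mpr
      (h ▸ isQuasiLeaf_iff_label_length.mp hxq)
    exact eq_of_label_eq_of_isLeft_eq h
      ((isLeft_of_isQuasiLeaf hxq).trans (isLeft_of_isQuasiLeaf hyq).symm)
  · have hyq : ¬ IsQuasiLeaf y := fun hyq => hxq (isQuasiLeaf_iff_label_length.mpr
      (h ▸ isQuasiLeaf_iff_label_length.mp hyq))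
    exact eq_of_label_eq_of_isLeft_eq h ((hS x hx hxq).trans (hS y hy hyq).symm)

lemma exists_append_of_isQuasiLeaf {a b : GTVert r t} (w : (GT r t).Walk a b)
    (ha : ¬ IsQuasiLeaf a) (hb : IsQuasiLeaf b) :
    ∃ v, IsQuasiLeaf v ∧ ∃ (w₁ : (GT r t).Walk a v) (w₂ : (GT r t).Walk v b),
      w = w₁.append w₂ ∧ (∀ z ∈ w₁.support, IsQuasiLeaf z → z = v) ∧
        ∀ z ∈ w₁.support, ¬ IsQuasiLeaf z → z.isLeft = a.isLeft := by
  induction w with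
  | nil => exact absurd hb ha
  | @cons a c b h w ih =>
    by_cases hc : IsQuasiLeaf c
    · refine ⟨c, hc, .cons h .nil, w, rfl, ?_, ?_⟩ <;> simp [ha, hc]
    · obtain ⟨v, hv, w₁, w₂, rfl, hw₁q, hw₁s⟩ := ih hc hb
      refine ⟨v, hv, .cons h w₁, w₂, rfl, fun z hz hzq => ?_, fun z hz hzq => ?_⟩ <;>
        rcases List.mem_cons.mp hz with rfl | hz
      exacts [absurd hzq ha, hw₁q z hz hzq, rfl,
        (hw₁s z hz hzq).trans (isLeft_eq_of_adj h ha hc).symm]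

lemma mirrorHom_eq_self {x : GTVert r t} (h : IsQuasiLeaf x) : mirrorHom x = x :=
  mirror_eq_self h

def mirrorWalk {u v : GTVert r t} (p : (GT r t).Walk u v) (hu : IsQuasiLeaf u)
    (hv : IsQuasiLeaf v) : (GT r t).Walk u v :=
  (p.map mirrorHom).copy (mirrorHom_eq_self hu) (mirrorHom_eq_self hv)

section mirrorWalk

variable {u v : GTVert r t} {p : (GT r t).Walk u v} {hu : IsQuasiLeaf u} {hv : IsQuasiLeaf v}

lemma support_mirrorWalk : (mirrorWalk p hu hv).support = p.support.map mirror := by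
  rw [mirrorWalk, Walk.support_copy, Walk.support_map]
  rfl

lemma edges_mirrorWalk : (mirrorWalk p hu hv).edges = p.edges.map (Sym2.map mirror) := by
  rw [mirrorWalk, Walk.edges_copy, Walk.edges_map]
  rfl

lemma isPath_mirrorWalk (hp : p.IsPath) : (mirrorWalk p hu hv).IsPath := by
  rw [GTVert.mirrorWalk, Walk.isPath_copy]
  exact hp.map (f := mirrorHom) mirror_injective

end mirrorWalk

lemma map_mirror_notMem_edges {u v : GTVert r t} {p : (GT r t).Walk u v} {b : Bool}
    (hp : ∀ z ∈ p.support, ¬ IsQuasiLeaf z → z.isLeft = b) {e : Sym2 (GTVert r t)}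
    (he : e ∈ p.edges) : e.map mirror ∉ p.edges := by
  have key : ∀ x y, s(x, y) ∈ p.edges → s(x.mirror, y.mirror) ∈ p.edges →
      ¬ IsQuasiLeaf x → False := fun x y hxy hm hx => by
    have := (hp _ (p.fst_mem_support_of_mem_edges hm) (by simpa using hx)).trans
      (hp x (p.fst_mem_support_of_mem_edges hxy) hx).symm
    rw [isLeft_mirror hx] at this
    cases x.isLeft <;> simp at this
  induction e using Sym2.ind with
  | h x y =>
    rw [Sym2.map_mk]
    intro hm
    rcases not_isQuasiLeaf_or_of_adj (p.adj_of_mem_edges he) with hx | hy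
    · exact key x y he hm hx
    · rw [Sym2.eq_swap] at he hm
      exact key y x he hm hy

structure IsArc {u v : GTVert r t} (p : (GT r t).Walk u v) (b : Bool) : Prop where
  isPath : p.IsPath
  eq_or_eq_of_isQuasiLeaf : ∀ z ∈ p.support, IsQuasiLeaf z → z = u ∨ z = v
  isLeft_eq : ∀ z ∈ p.support, ¬ IsQuasiLeaf z → z.isLeft = b

namespace IsArc

variable {u v : GTVert r t} {p : (GT r t).Walk u v} {b : Bool}

lemma mirrorWalk (hp : IsArc p b) (hu : IsQuasiLeaf u) (hv : IsQuasiLeaf v) :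
    IsArc (mirrorWalk p hu hv) (!b) := by
  refine ⟨isPath_mirrorWalk hp.isPath, ?_, ?_⟩ <;>
    simp only [support_mirrorWalk, List.mem_map] <;>
    rintro _ ⟨z, hz, rfl⟩ hzq <;> rw [isQuasiLeaf_mirror] at hzq
  · rcases hp.eq_or_eq_of_isQuasiLeaf z hz hzq with rfl | rfl
    exacts [.inl (mirror_eq_self hu), .inr (mirror_eq_self hv)]
  · rw [isLeft_mirror hzq, hp.isLeft_eq z hz hzq]

lemma isGeodesic (hp : IsArc p b) : IsGeodesic (GT r t) p := by
  refine ⟨hp.isPath, p.length_eq_dist_of_isPath_map labelHom (prefixTree_isAcyclic t) ?_⟩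
  rw [Walk.isPath_def, Walk.support_map]
  exact hp.isPath.support_nodup.map_on fun x hx y hy => injOn_label hp.isLeft_eq hx hy

lemma not_isQuasiLeaf (hp : IsArc p b) {z : GTVert r t} (hz : z ∈ p.support) (hzu : z ≠ u)
    (hzv : z ≠ v) : ¬ IsQuasiLeaf z := fun hzq => by
  rcases hp.eq_or_eq_of_isQuasiLeaf z hz hzq with h | h <;> contradiction

lemma inCopyOne (hp : IsArc p true) : ∀ z ∈ p.support, z ≠ u → z ≠ v → InCopyOne z :=
  fun z hz hzu hzv => inCopyOne_iff.mpr
    ⟨hp.isLeft_eq z hz (hp.not_isQuasiLeaf hz hzu hzv), hp.not_isQuasiLeaf hz hzu hzv⟩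

lemma inCopyTwo (hp : IsArc p false) : ∀ z ∈ p.support, z ≠ u → z ≠ v → InCopyTwo z :=
  fun z hz hzu hzv => inCopyTwo_iff.mpr (hp.isLeft_eq z hz (hp.not_isQuasiLeaf hz hzu hzv))

end IsArc

theorem reverse_mirrorWalk_eq_of_isCycle {u v : GTVert r t} (hu : IsQuasiLeaf u)
    (hv : IsQuasiLeaf v) {A : (GT r t).Walk u v} {B : (GT r t).Walk v u} {b : Bool}
    (hc : (A.append B).IsCycle) (hA : A.IsPath) (hB : B.IsPath)
    (hAb : ∀ z ∈ A.support, ¬ IsQuasiLeaf z → z.isLeft = b) :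
    (mirrorWalk A hu hv).reverse = B := by
  refine (isPath_mirrorWalk hA).reverse.eq_of_edges_subset hB fun e he => ?_
  rw [Walk.edges_reverse, List.mem_reverse, edges_mirrorWalk, List.mem_map] at he
  obtain ⟨f, hf, rfl⟩ := he
  have := map_mirror_mem_edges_of_isCycle hc
    (Walk.edges_append A B ▸ List.mem_append_left _ hf)
  rw [Walk.edges_append, List.mem_append] at this
  exact this.resolve_left (map_mirror_notMem_edges hAb hf)

theorem exists_isArc_of_isCycle {x u : GTVert r t} {c : (GT r t).Walk x x} (hc : c.IsCycle)
    (hu : IsQuasiLeaf u) (hu_mem : u ∈ c.support) :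
    ∃ (v : GTVert r t) (hv : IsQuasiLeaf v) (A : (GT r t).Walk u v) (b : Bool), u ≠ v ∧
      IsArc A b ∧
        ∀ z, z ∈ c.support ↔ z ∈ A.support ∨ z ∈ (mirrorWalk A hu hv).support := by
  classical
  have hc' := hc.rotate hu_mem
  obtain ⟨s, hus, w, hw⟩ := Walk.not_nil_iff.mp hc'.not_nil
  have hs : ¬ IsQuasiLeaf s := (not_isQuasiLeaf_or_of_adj hus).resolve_left (not_not.mpr hu)
  obtain ⟨v, hv, w₁, w₂, rfl, hw₁q, hw₁s⟩ := exists_append_of_isQuasiLeaf w hs hu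
  set A := Walk.cons hus w₁
  rw [← Walk.cons_append] at hw
  rw [hw] at hc'
  have hAq : ∀ z ∈ A.support, IsQuasiLeaf z → z = u ∨ z = v := fun z hz hzq => by
    rcases List.mem_cons.mp hz with rfl | hz
    exacts [.inl rfl, .inr (hw₁q z hz hzq)]
  have hAs : ∀ z ∈ A.support, ¬ IsQuasiLeaf z → z.isLeft = s.isLeft := fun z hz hzq => by
    rcases List.mem_cons.mp hz with rfl | hz
    exacts [absurd hu hzq, hw₁s z hz hzq]
  -- Otherwise the cycle would be `A`, which contains no mirror image of its own edges.
  have hw₂ : ¬ w₂.Nil := fun hnil => by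
    obtain rfl := hnil.eq
    rw [hnil.eq_nil, Walk.append_nil] at hc'
    exact map_mirror_notMem_edges hAs List.mem_cons_self
      (map_mirror_mem_edges_of_isCycle hc' List.mem_cons_self)
  have hA : A.IsPath := hc'.isPath_of_append_left hw₂
  have huv : u ≠ v := by
    rintro rfl
    exact Walk.not_nil_cons (Walk.isPath_iff_nil.mp hA)
  have hB := reverse_mirrorWalk_eq_of_isCycle hu hv hc' hA
    (hc'.isPath_of_append_right Walk.not_nil_cons) hAs
  refine ⟨v, hv, A, s.isLeft, huv, ⟨hA, hAq, hAs⟩, fun z => ?_⟩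
  rw [← c.mem_support_rotate_iff u hu_mem, hw, Walk.mem_support_append_iff, ← hB,
    Walk.support_reverse, List.mem_reverse]

theorem exists_isArc_true_of_isCycle {x u : GTVert r t} {c : (GT r t).Walk x x}
    (hc : c.IsCycle) (hu : IsQuasiLeaf u) (hu_mem : u ∈ c.support) :
    ∃ (v : GTVert r t) (hv : IsQuasiLeaf v) (A : (GT r t).Walk u v), u ≠ v ∧
      IsArc A true ∧
        ∀ z, z ∈ c.support ↔ z ∈ A.support ∨ z ∈ (mirrorWalk A hu hv).support := by
  obtain ⟨v, hv, A, b, huv, hA, hcA⟩ := exists_isArc_of_isCycle hc hu hu_mem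
  cases b
  · refine ⟨v, hv, mirrorWalk A hu hv, huv, hA.mirrorWalk hu hv, fun z => ?_⟩
    simp [hcA, or_comm, support_mirrorWalk]
  · exact ⟨v, hv, A, huv, hA, hcA⟩

end GTVert

theorem GT_cycle_two_quasiLeaves_general (r : ℕ)
    (x : GTVert r 2) (c : (GT r 2).Walk x x) (hc : c.IsCycle) :
    {z | z ∈ c.support ∧ IsQuasiLeaf z}.ncard = 2 ∧
    ∃ u v : GTVert r 2, u ≠ v ∧ IsQuasiLeaf u ∧ IsQuasiLeaf v ∧
      u ∈ c.support ∧ v ∈ c.support ∧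
      ∃ p q : (GT r 2).Walk u v, IsGeodesic (GT r 2) p ∧ IsGeodesic (GT r 2) q ∧
        (∀ z ∈ p.support, z ≠ u → z ≠ v → InCopyOne z) ∧
        (∀ z ∈ q.support, z ≠ u → z ≠ v → InCopyTwo z) ∧
        {z | z ∈ c.support} = {z | z ∈ p.support} ∪ {z | z ∈ q.support} := by
  obtain ⟨u, hu_mem, hu⟩ := GTVert.exists_isQuasiLeaf_mem_support_of_isCycle hc
  obtain ⟨v, hv, p, huv, hp, hcp⟩ := GTVert.exists_isArc_true_of_isCycle hc hu hu_mem
  have hq := hp.mirrorWalk hu hv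
  have hquasi : {z | z ∈ c.support ∧ IsQuasiLeaf z} = {u, v} := by
    ext z
    refine ⟨fun ⟨hz, hzq⟩ => ?_, ?_⟩
    · rcases (hcp z).mp hz with hz | hz
      exacts [hp.eq_or_eq_of_isQuasiLeaf z hz hzq, hq.eq_or_eq_of_isQuasiLeaf z hz hzq]
    · rintro (rfl | rfl)
      exacts [⟨hu_mem, hu⟩, ⟨(hcp z).mpr (.inl p.end_mem_support), hv⟩]
  refine ⟨hquasi ▸ Set.ncard_pair huv, u, v, huv, hu, hv, hu_mem,
    (hcp v).mpr (.inl p.end_mem_support), p, GTVert.mirrorWalk p hu hv, hp.isGeodesic,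
    hq.isGeodesic, hp.inCopyOne, hq.inCopyTwo, Set.ext hcp⟩

/-- Every cycle in the glued binary tree `GT(r)` contains exactly two
quasi-leaves, and its vertex set is the union of the vertex sets of the two
geodesics joining these two quasi-leaves. -/
theorem GT_cycle_two_quasiLeaves (r : ℕ) (hr : 1 ≤ r)
    (x : GTVert r 2) (c : (GT r 2).Walk x x) (hc : c.IsCycle) :
    {z | z ∈ c.support ∧ IsQuasiLeaf z}.ncard = 2 ∧
    ∃ u v : GTVert r 2, u ≠ v ∧ IsQuasiLeaf u ∧ IsQuasiLeaf v ∧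
      u ∈ c.support ∧ v ∈ c.support ∧
      ∃ p q : (GT r 2).Walk u v, IsGeodesic (GT r 2) p ∧ IsGeodesic (GT r 2) q ∧
        (∀ z ∈ p.support, z ≠ u → z ≠ v → InCopyOne z) ∧
        (∀ z ∈ q.support, z ≠ u → z ≠ v → InCopyTwo z) ∧
        {z | z ∈ c.support} = {z | z ∈ p.support} ∪ {z | z ∈ q.support} :=
  GT_cycle_two_quasiLeaves_general r x c hc
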